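/- Let 0 < q < 1 and define \zeta[3] := \sum_{k=1}^\infty q^{2k}/[k]_q^3 and \zeta[2,1] := \sum_{k_1 > k_2 > 0} q^{k_1}/([k_1]_q^2 [k_2]_q). Then \zeta[2,1] = \zeta[3]. -/

import Mathlib

noncomputable def qnum (q : ℝ) (k : ℕ) : ℝ := (1 - q ^ k) / (1 - q)

/-!
A q-analogue of Borwein's proof of `ζ(2,1) = ζ(3)`. Write `S(j, k) = q^(j+k) / ([j]^2 [k])`
(`qterm` below). For `j, k ≥ 1` we have `[j + k] = [j] + q^j [k]`, and the partial fraction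
decomposition of `1 / ([j]^2 [k])` along this relation gives
`S(j, k) = S(j, j + k) + q^(j+k) / ([j+k]^2 [k]) + S(j + k, j)`.
Summed over all `j, k ≥ 1`, the first and last terms on the right run over the pairs above and
below the diagonal. So the absolutely convergent sum of `S`, minus these two pieces, is on one
hand `ζ[2,1]` and on the other the diagonal sum `∑ S(n, n) = ζ[3]`.
-/

open Function

theorem Summable.tsum_nat_prod_eq_upper_add_lower_add_diag {M : Type*} [AddCommGroup M]
    [UniformSpace M] [IsUniformAddGroup M] [CompleteSpace M] [T2Space M] {f : ℕ × ℕ → M}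
    (hf : Summable f) :
    ∑' p, f p = ∑' p : ℕ × ℕ, f (p.1, p.1 + p.2 + 1) + ∑' p : ℕ × ℕ, f (p.1 + p.2 + 1, p.1)
      + ∑' n, f (n, n) := by
  let g : (ℕ × ℕ ⊕ ℕ × ℕ) ⊕ ℕ → ℕ × ℕ :=
    Sum.elim (Sum.elim (fun p ↦ (p.1, p.1 + p.2 + 1)) (fun p ↦ (p.1 + p.2 + 1, p.1))) fun n ↦ (n, n)
  have hg : Bijective g := by
    refine ⟨?_, ?_⟩
    · rintro ((⟨a, d⟩ | ⟨a, d⟩) | n) ((⟨a', d'⟩ | ⟨a', d'⟩) | n') h <;>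
        simp only [g, Sum.elim_inl, Sum.elim_inr, Prod.mk.injEq, Sum.inl.injEq, Sum.inr.injEq,
          reduceCtorEq] at h ⊢ <;> omega
    · rintro ⟨a, b⟩
      rcases lt_trichotomy a b with h | rfl | h
      · exact ⟨.inl (.inl (a, b - a - 1)), Prod.ext rfl (show a + (b - a - 1) + 1 = b by omega)⟩
      · exact ⟨.inr a, rfl⟩
      · exact ⟨.inl (.inr (b, a - b - 1)), Prod.ext (show b + (a - b - 1) + 1 = a by omega) rfl⟩
  have hU : Summable fun p : ℕ × ℕ ↦ f (p.1, p.1 + p.2 + 1) :=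
    hf.comp_injective (hg.injective.comp (Sum.inl_injective.comp Sum.inl_injective))
  have hL : Summable fun p : ℕ × ℕ ↦ f (p.1 + p.2 + 1, p.1) :=
    hf.comp_injective (hg.injective.comp (Sum.inl_injective.comp Sum.inr_injective))
  have hD : Summable fun n ↦ f (n, n) := hf.comp_injective (hg.injective.comp Sum.inr_injective)
  have hsum : HasSum (f ∘ g) _ := (hU.hasSum.sum hL.hasSum).sum hD.hasSum
  exact ((hg.injective.hasSum_iff fun x hx ↦ (hx (hg.surjective x)).elim).1 hsum).tsum_eq

theorem tsum_subtype_lt_pos_eq_tsum_nat_prod {M : Type*} [AddCommMonoid M] [TopologicalSpace M]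
    (f : ℕ → ℕ → M) :
    ∑' p : {p : ℕ × ℕ // p.2 < p.1 ∧ 0 < p.2}, f p.1.1 p.1.2
      = ∑' p : ℕ × ℕ, f (p.1 + 1 + (p.2 + 1)) (p.2 + 1) := by
  let e : ℕ × ℕ ≃ {p : ℕ × ℕ // p.2 < p.1 ∧ 0 < p.2} :=
    { toFun p := ⟨(p.1 + 1 + (p.2 + 1), p.2 + 1), by omega⟩
      invFun p := (p.1.1 - p.1.2 - 1, p.1.2 - 1)
      left_inv p := by ext <;> simp
      right_inv p := by obtain ⟨⟨a, b⟩, h⟩ := p; ext <;> dsimp only <;> omega }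
  exact (e.tsum_eq fun p ↦ f p.1.1 p.1.2).symm

theorem one_div_sq_mul_eq_add_add {K : Type*} [Field K] {a b t : K} (ha : a ≠ 0) (hb : b ≠ 0)
    (hc : a + t * b ≠ 0) :
    1 / (a ^ 2 * b) = t / (a ^ 2 * (a + t * b)) + 1 / ((a + t * b) ^ 2 * b)
      + t / ((a + t * b) ^ 2 * a) := by
  rw [div_add_div _ _ (by positivity) (by positivity), div_add_div _ _ (by positivity)
    (by positivity), div_eq_div_iff (by positivity) (by positivity)]
  ring

theorem qnum_add {q : ℝ} (hq : q ≠ 1) (j k : ℕ) :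
    qnum q (j + k) = qnum q j + q ^ j * qnum q k := by
  have : 1 - q ≠ 0 := sub_ne_zero.2 hq.symm
  unfold qnum
  field_simp
  ring

theorem one_le_qnum {q : ℝ} (hq0 : 0 ≤ q) (hq1 : q < 1) {k : ℕ} (hk : k ≠ 0) : 1 ≤ qnum q k := by
  have : q ^ k ≤ q := pow_le_of_le_one hq0 hq1.le hk
  rw [qnum, le_div_iff₀ (by linarith)]
  linarith

noncomputable def qterm (q : ℝ) (j k : ℕ) : ℝ := q ^ (j + k) / (qnum q j ^ 2 * qnum q k)

theorem qterm_nonneg {q : ℝ} (hq0 : 0 ≤ q) (hq1 : q < 1) {j k : ℕ} (hj : j ≠ 0) (hk : k ≠ 0) :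
    0 ≤ qterm q j k := by
  have := one_le_qnum hq0 hq1 hj
  have := one_le_qnum hq0 hq1 hk
  unfold qterm
  positivity

theorem qterm_le_pow {q : ℝ} (hq0 : 0 ≤ q) (hq1 : q < 1) {j k : ℕ} (hj : j ≠ 0) (hk : k ≠ 0) :
    qterm q j k ≤ q ^ (j + k) :=
  div_le_self (pow_nonneg hq0 _) <|
    one_le_mul_of_one_le_of_one_le (one_le_pow₀ (one_le_qnum hq0 hq1 hj)) (one_le_qnum hq0 hq1 hk)

theorem summable_qterm_succ {q : ℝ} (hq0 : 0 ≤ q) (hq1 : q < 1) :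
    Summable fun p : ℕ × ℕ ↦ qterm q (p.1 + 1) (p.2 + 1) := by
  have hgeo := summable_geometric_of_lt_one hq0 hq1
  refine .of_nonneg_of_le (fun _ ↦ qterm_nonneg hq0 hq1 (by omega) (by omega)) (fun p ↦ ?_)
    (hgeo.mul_of_nonneg hgeo (fun n ↦ pow_nonneg hq0 n) (fun n ↦ pow_nonneg hq0 n))
  calc qterm q (p.1 + 1) (p.2 + 1) ≤ q ^ (p.1 + 1 + (p.2 + 1)) :=
        qterm_le_pow hq0 hq1 (by omega) (by omega)
    _ ≤ q ^ p.1 * q ^ p.2 := by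
        rw [← pow_add]
        exact pow_le_pow_of_le_one hq0 hq1.le (by omega)

theorem qterm_eq_add_add {q : ℝ} (hq0 : 0 ≤ q) (hq1 : q < 1) {j k : ℕ} (hj : j ≠ 0)
    (hk : k ≠ 0) :
    qterm q j k = qterm q j (j + k) + q ^ (j + k) / (qnum q (j + k) ^ 2 * qnum q k)
      + qterm q (j + k) j := by
  have hne : ∀ {n : ℕ}, n ≠ 0 → qnum q n ≠ 0 := fun hn ↦
    (zero_lt_one.trans_le (one_le_qnum hq0 hq1 hn)).ne'
  have hjk : qnum q j + q ^ j * qnum q k ≠ 0 := by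
    rw [← qnum_add hq1.ne]
    exact hne (by omega)
  have hpf := one_div_sq_mul_eq_add_add (hne hj) (hne hk) hjk
  simp only [qterm, qnum_add hq1.ne]
  rw [div_eq_mul_one_div, hpf]
  ring

theorem qzeta21_eq_qzeta3 (q : ℝ) (hq0 : 0 < q) (hq1 : q < 1) :
    (∑' p : {p : ℕ × ℕ // p.2 < p.1 ∧ 0 < p.2},
        q ^ p.1.1 / ((qnum q p.1.1) ^ 2 * qnum q p.1.2))
      = ∑' k : ℕ+, q ^ (2 * (k : ℕ)) / (qnum q k) ^ 3 := by
  set W : ℕ × ℕ → ℝ := fun p ↦ qterm q (p.1 + 1) (p.2 + 1) with hW_def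
  have hW : Summable W := summable_qterm_succ hq0.le hq1
  have hU : Summable fun p : ℕ × ℕ ↦ W (p.1, p.1 + p.2 + 1) :=
    hW.comp_injective fun p p' h ↦ by simp only [Prod.mk.injEq] at h; ext <;> omega
  have hL : Summable fun p : ℕ × ℕ ↦ W (p.1 + p.2 + 1, p.1) :=
    hW.comp_injective fun p p' h ↦ by simp only [Prod.mk.injEq] at h; ext <;> omega
  have hZ (p : ℕ × ℕ) :
      q ^ (p.1 + 1 + (p.2 + 1)) / (qnum q (p.1 + 1 + (p.2 + 1)) ^ 2 * qnum q (p.2 + 1))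
        = W p - W (p.1, p.1 + p.2 + 1) - W (p.1 + p.2 + 1, p.1) := by
    have h := qterm_eq_add_add hq0.le hq1 (j := p.1 + 1) (k := p.2 + 1) (by omega) (by omega)
    simp only [hW_def, show p.1 + p.2 + 1 + 1 = p.1 + 1 + (p.2 + 1) by ring, h]
    ring
  have hdiag (n : ℕ) : W (n, n) = q ^ (2 * (n + 1)) / qnum q (n + 1) ^ 3 := by
    simp only [hW_def, qterm]
    ring
  rw [tsum_subtype_lt_pos_eq_tsum_nat_prod fun n k ↦ q ^ n / (qnum q n ^ 2 * qnum q k),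
    tsum_congr hZ, (hW.sub hU).tsum_sub hL, hW.tsum_sub hU,
    hW.tsum_nat_prod_eq_upper_add_lower_add_diag,
    tsum_pnat_eq_tsum_succ (f := fun n ↦ q ^ (2 * n) / qnum q n ^ 3), ← tsum_congr hdiag]
  abel
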